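/- arXiv:1907.07479 — 5 statements merged into one kernel-verified Lean document; each statement's English description precedes it below -/
import Mathlib

section
/- Let d ≥ 2 be an integer and b ≥ (d+1)/(d−1) a real number. Then the set {λ ∈ S¹ : there exists n ≥ 1 with f_λ^n(1) = −1} is dense in the unit circle S¹. (Equivalently, the zero parameters on the unit circle of the anti-ferromagnetic Ising partition function of rooted Cayley trees of down-degree d are dense in S¹.) -/
open Complex

/-- The Ising recursion map `f_λ(z) = λ·((z+b)/(bz+1))^d`. -/
noncomputable def fIsing (d : ℕ) (b : ℝ) (lam z : ℂ) : ℂ :=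
  lam * ((z + (b : ℂ)) / ((b : ℂ) * z + 1)) ^ d

/-!
Write `λ = exp (θ * I)` and lift the orbit of `1` to angles: `f_λ^[n] 1 = exp (A n θ * I)` with
`A (n + 1) θ = θ + g (A n θ)`, where `g` lifts `z ↦ ((z + b) / (b z + 1)) ^ d` and
`g' = -(1 + p)`. The hypothesis `b ≥ (d + 1) / (d - 1)` gives
`p α ≥ κ ‖exp (α * I) - 1‖ ^ 2` with `κ = b / (b + 1) ^ 2`.
The derivatives `a n = ∂θ A n` satisfy `a (n + 1) = 1 - (1 + p (A n)) a n`, whence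
`a (n + 2) - a n ≥ p (A n) + p (A (n + 1)) (a n - 1)`: the odd derivatives grow linearly as long
as no two consecutive orbit points are close to `1`. On the circle
`‖λ - 1‖ ≤ ‖f_λ z - 1‖ + d ‖z - 1‖`, so this holds uniformly for `θ` near any `θ₀ ∉ 2πℤ`.
Hence for large `N` the angle `A N` sweeps more than `2π` on a short interval of parameters and,
by the intermediate value theorem, passes through `π + 2πℤ`.
-/

open Real Topology

theorem norm_pow_sub_one_le_of_norm_le_one {R : Type*} [SeminormedRing R] {u : R}
    (hu : ‖u‖ ≤ 1) (n : ℕ) : ‖u ^ n - 1‖ ≤ n * ‖u - 1‖ := by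
  induction n with
  | zero => simp
  | succ n ih =>
    calc ‖u ^ (n + 1) - 1‖ = ‖u * (u ^ n - 1) + (u - 1)‖ := by
          rw [pow_succ']; congr 1; noncomm_ring
      _ ≤ ‖u‖ * ‖u ^ n - 1‖ + ‖u - 1‖ :=
          (norm_add_le _ _).trans (by gcongr; exact norm_mul_le _ _)
      _ ≤ (n + 1 : ℕ) * ‖u - 1‖ := by
        push_cast
        nlinarith [norm_nonneg (u ^ n - 1)]

section Recurrence

variable {a p : ℕ → ℝ} (hrec : ∀ n, a (n + 1) = 1 - (1 + p n) * a n) (hp : ∀ n, 0 ≤ p n)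
include hrec hp

theorem add_le_of_one_sub_mul_recurrence {n : ℕ} (ha : 1 ≤ a n) :
    a n + (p n + p (n + 1) * (a n - 1)) ≤ a (n + 2) := by
  rw [hrec (n + 1), hrec n]
  nlinarith [mul_nonneg (hp n) (sub_nonneg.mpr ha),
    mul_nonneg (mul_nonneg (hp n) (hp (n + 1))) (zero_le_one.trans ha)]

theorem le_of_one_sub_mul_recurrence (ha : a 0 = 0) {δ : ℝ} (hδ : 0 ≤ δ)
    (hpδ : ∀ n, δ ≤ p (n + 1) ∨ δ ≤ p (n + 2)) (k : ℕ) :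
    p 1 + k * (δ * min 1 (p 1)) ≤ a (2 * k + 3) - 1 := by
  have hmin : δ * min 1 (p 1) ≤ δ := mul_le_of_le_one_right hδ (min_le_left _ _)
  have hmin' : δ * min 1 (p 1) ≤ δ * p 1 := mul_le_mul_of_nonneg_left (min_le_right _ _) hδ
  induction k with
  | zero =>
    have h1 : a 1 = 1 := by rw [hrec 0, ha, mul_zero, sub_zero]
    have := add_le_of_one_sub_mul_recurrence hrec hp h1.ge
    rw [h1, sub_self, mul_zero, add_zero] at this
    rw [Nat.cast_zero, zero_mul, add_zero]
    linarith
  | succ k ih =>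
    have hk : 0 ≤ k * (δ * min 1 (p 1)) :=
      mul_nonneg k.cast_nonneg (mul_nonneg hδ (le_min zero_le_one (hp 1)))
    have ha1 : p 1 ≤ a (2 * k + 3) - 1 := by linarith
    have hstep := add_le_of_one_sub_mul_recurrence hrec hp (n := 2 * k + 3) (by linarith [hp 1])
    have hgain : δ * min 1 (p 1) ≤ p (2 * k + 3) + p (2 * k + 4) * (a (2 * k + 3) - 1) := by
      rcases hpδ (2 * k + 2) with h | h
      · nlinarith [mul_nonneg (hp (2 * k + 4)) ((hp 1).trans ha1)]
      · nlinarith [mul_le_mul h ha1 (hp 1) (hp (2 * k + 4)), hp (2 * k + 3)]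
    rw [show 2 * (k + 1) + 3 = 2 * k + 3 + 2 by ring]
    push_cast
    linarith

end Recurrence

namespace IsingCircle

variable {d : ℕ} {b : ℝ}

lemma sub_one_le_norm_mul_add_one (hb : 1 < b) {z : ℂ} (hz : ‖z‖ = 1) :
    b - 1 ≤ ‖(b : ℂ) * z + 1‖ := by
  have := norm_sub_norm_le ((b : ℂ) * z) (-1)
  simp only [norm_mul, hz, norm_neg, norm_one, sub_neg_eq_add, Complex.norm_real,
    Real.norm_eq_abs, abs_of_pos (by linarith : 0 < b)] at this
  linarith

lemma norm_mobius_eq_one (hb : 1 < b) {z : ℂ} (hz : ‖z‖ = 1) :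
    ‖(z + b) / (b * z + 1)‖ = 1 := by
  have hne : (b : ℂ) * z + 1 ≠ 0 := norm_pos_iff.mp ((by linarith : (0:ℝ) < b - 1).trans_le
    (sub_one_le_norm_mul_add_one hb hz))
  rw [norm_div, div_eq_one_iff_eq (norm_ne_zero_iff.mpr hne)]
  have hzc : z * (starRingEnd ℂ) z = 1 := by
    rw [Complex.mul_conj, Complex.normSq_eq_norm_sq, hz]; simp
  calc ‖z + b‖ = ‖z‖ * ‖(starRingEnd ℂ) (z + b)‖ := by rw [hz, Complex.norm_conj, one_mul]
    _ = ‖b * z + 1‖ := by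
      rw [← norm_mul, map_add, Complex.conj_ofReal, mul_add, hzc, add_comm, mul_comm]

lemma norm_mobius_sub_one_le (hb : 1 < b) {z : ℂ} (hz : ‖z‖ = 1) :
    ‖(z + b) / (b * z + 1) - 1‖ ≤ ‖z - 1‖ := by
  have hb1 : (0:ℝ) < b - 1 := by linarith
  have hden := sub_one_le_norm_mul_add_one hb hz
  have hne : (b : ℂ) * z + 1 ≠ 0 := norm_pos_iff.mp (hb1.trans_le hden)
  have : (z + b) / (b * z + 1) - 1 = (1 - b) * (z - 1) / (b * z + 1) := by
    rw [div_sub_one hne]; ring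
  rw [this, norm_div, norm_mul, div_le_iff₀ (hb1.trans_le hden)]
  have h1b : ‖(1 : ℂ) - b‖ = b - 1 := by
    rw [← Complex.ofReal_one, ← Complex.ofReal_sub, Complex.norm_real, Real.norm_eq_abs,
      abs_of_neg (by linarith)]; ring
  rw [h1b, mul_comm]
  exact mul_le_mul_of_nonneg_left hden (norm_nonneg _)

theorem norm_sub_one_le_fIsing (hb : 1 < b) {lam z : ℂ} (hlam : ‖lam‖ = 1)
    (hz : ‖z‖ = 1) : ‖lam - 1‖ ≤ ‖fIsing d b lam z - 1‖ + d * ‖z - 1‖ := by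
  set u := (z + b) / (b * z + 1)
  have hu : ‖u ^ d - 1‖ ≤ d * ‖z - 1‖ :=
    (norm_pow_sub_one_le_of_norm_le_one (norm_mobius_eq_one hb hz).le d).trans
      (by gcongr; exact norm_mobius_sub_one_le hb hz)
  calc ‖lam - 1‖ = ‖(fIsing d b lam z - 1) - lam * (u ^ d - 1)‖ := by
        rw [fIsing]; congr 1; ring
    _ ≤ ‖fIsing d b lam z - 1‖ + d * ‖z - 1‖ := by
      refine (norm_sub_le _ _).trans ?_
      rw [norm_mul, hlam, one_mul]; gcongr

/-- The argument of `b + exp (α * I)` (see `arg_ofReal_add_exp`), written as a smooth function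
of `α`. -/
noncomputable def argAdd (b α : ℝ) : ℝ := arctan (Real.sin α / (b + Real.cos α))

lemma add_cos_pos (hb : 1 < b) (α : ℝ) : 0 < b + Real.cos α := by
  linarith [Real.neg_one_le_cos α]

lemma arg_ofReal_add_exp (hb : 1 < b) (α : ℝ) : arg (b + exp (α * I)) = argAdd b α := by
  have hre : 0 < (b + exp (α * I)).re := by
    simpa [Complex.exp_ofReal_mul_I_re] using add_cos_pos hb α
  have harg := abs_lt.mp (abs_arg_lt_pi_div_two_iff.mpr (Or.inl hre))
  rw [argAdd, ← arctan_tan harg.1 harg.2, tan_arg]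
  simp [Complex.exp_ofReal_mul_I_re, Complex.exp_ofReal_mul_I_im]

lemma mobius_exp (hb : 1 < b) (α : ℝ) :
    (exp (α * I) + b) / (b * exp (α * I) + 1) = exp ((2 * argAdd b α - α : ℝ) * I) := by
  rw [add_comm]
  set w : ℂ := b + exp (α * I)
  have hw : w ≠ 0 := fun h => by
    have := congrArg Complex.re h
    simp only [w, add_re, ofReal_re, exp_ofReal_mul_I_re, zero_re] at this
    linarith [add_cos_pos hb α]
  have hpolar : w = ‖w‖ * exp (argAdd b α * I) := by
    rw [← arg_ofReal_add_exp hb, Complex.norm_mul_exp_arg_mul_I]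
  have hden : (b : ℂ) * exp (α * I) + 1 = exp (α * I) * (starRingEnd ℂ) w := by
    rw [map_add, Complex.conj_ofReal, ← Complex.exp_conj, mul_add, ← Complex.exp_add]
    simp only [map_mul, conj_ofReal, conj_I, mul_neg, add_neg_cancel, Complex.exp_zero]
    ring
  have hconj : (starRingEnd ℂ) w = ‖w‖ * exp (-(argAdd b α * I)) := by
    conv_lhs => rw [hpolar]
    rw [map_mul, Complex.conj_ofReal, ← Complex.exp_conj, map_mul, Complex.conj_ofReal,
      Complex.conj_I, mul_neg]
  have hn : (‖w‖ : ℂ) ≠ 0 := by exact_mod_cast norm_ne_zero_iff.mpr hw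
  rw [hden, hconj, div_eq_iff (by simp [hn, Complex.exp_ne_zero])]
  conv_lhs => rw [hpolar]
  rw [← mul_assoc, mul_left_comm, ← Complex.exp_add, ← Complex.exp_add]
  congr 2
  push_cast; ring

variable (d b)

/-- A lift of `z ↦ ((z + b) / (b z + 1)) ^ d` to angles, by `mobius_exp`. -/
noncomputable def stepLift (α : ℝ) : ℝ := d * (2 * argAdd b α - α)

noncomputable def orbitAngle : ℕ → ℝ → ℝ
  | 0, _ => 0
  | n + 1, θ => θ + stepLift d b (orbitAngle n θ)

/-- `stepLift` has derivative `-(1 + stepExpansion)`. For `b = (d + 1) / (d - 1)` the expansion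
vanishes at `α = 0`, so `stepExpansion_ge` can only be quadratic in `‖exp (α * I) - 1‖`. -/
noncomputable def stepExpansion (α : ℝ) : ℝ :=
  d * (b ^ 2 - 1) / (b ^ 2 + 2 * b * Real.cos α + 1) - 1

noncomputable def orbitAngleDeriv : ℕ → ℝ → ℝ
  | 0, _ => 0
  | n + 1, θ => 1 - (1 + stepExpansion d b (orbitAngle d b n θ)) * orbitAngleDeriv n θ

variable {d b}

theorem fIsing_iterate_one (hb : 1 < b) (θ : ℝ) (n : ℕ) :
    (fIsing d b (exp (θ * I)))^[n] 1 = exp (orbitAngle d b n θ * I) := by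
  induction n with
  | zero => simp [orbitAngle]
  | succ n ih =>
    rw [Function.iterate_succ_apply', ih, fIsing, mobius_exp hb, ← Complex.exp_nat_mul,
      ← Complex.exp_add, orbitAngle, stepLift]
    push_cast; ring_nf

lemma orbitAngle_one (θ : ℝ) : orbitAngle d b 1 θ = θ := by
  simp [orbitAngle, stepLift, argAdd]

lemma sq_add_two_mul_cos_add_one_pos (hb : 1 < b) (α : ℝ) :
    0 < b ^ 2 + 2 * b * Real.cos α + 1 := by
  nlinarith [Real.neg_one_le_cos α]

lemma hasDerivAt_argAdd (hb : 1 < b) (α : ℝ) :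
    HasDerivAt (argAdd b) ((b * Real.cos α + 1) / (b ^ 2 + 2 * b * Real.cos α + 1)) α := by
  have hp := add_cos_pos hb α
  refine ((Real.hasDerivAt_sin α).div ((hasDerivAt_const α b).add (Real.hasDerivAt_cos α))
    hp.ne').arctan.congr_deriv ?_
  have hD := sq_add_two_mul_cos_add_one_pos hb α
  have : b * (b + 2 * Real.cos α) + 1 ≠ 0 := by nlinarith
  dsimp only [Pi.div_apply, Pi.add_apply]
  field_simp
  rw [eq_div_iff (by nlinarith)]
  linear_combination (b ^ 2 + b * Real.cos α) * Real.sin_sq_add_cos_sq α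

lemma hasDerivAt_stepLift (hb : 1 < b) (α : ℝ) :
    HasDerivAt (stepLift d b) (-(1 + stepExpansion d b α)) α := by
  refine ((((hasDerivAt_argAdd hb α).const_mul 2).sub (hasDerivAt_id α)).const_mul
    (d : ℝ)).congr_deriv ?_
  have hD := sq_add_two_mul_cos_add_one_pos hb α
  have : b * (b + 2 * Real.cos α) + 1 ≠ 0 := by nlinarith
  rw [stepExpansion]
  field_simp
  ring

theorem hasDerivAt_orbitAngle (hb : 1 < b) (n : ℕ) (θ : ℝ) :
    HasDerivAt (orbitAngle d b n) (orbitAngleDeriv d b n θ) θ := by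
  induction n with
  | zero => exact hasDerivAt_const θ 0
  | succ n ih =>
    refine ((hasDerivAt_id θ).add ((hasDerivAt_stepLift hb _).comp θ ih)).congr_deriv ?_
    rw [orbitAngleDeriv]; ring

lemma norm_exp_ofReal_mul_I_sub_one_sq (α : ℝ) : ‖exp (α * I) - 1‖ ^ 2 = 2 - 2 * Real.cos α := by
  rw [← Complex.normSq_eq_norm_sq, Complex.normSq_apply]
  simp only [Complex.sub_re, Complex.sub_im, Complex.exp_ofReal_mul_I_re,
    Complex.exp_ofReal_mul_I_im, Complex.one_re, Complex.one_im]
  linear_combination Real.sin_sq_add_cos_sq α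

theorem stepExpansion_ge (hb : 1 < b) (hd : b + 1 ≤ d * (b - 1)) (α : ℝ) :
    b / (b + 1) ^ 2 * ‖exp (α * I) - 1‖ ^ 2 ≤ stepExpansion d b α := by
  rw [norm_exp_ofReal_mul_I_sub_one_sq, stepExpansion]
  have hD := sq_add_two_mul_cos_add_one_pos hb α
  have hc := Real.cos_le_one α
  calc b / (b + 1) ^ 2 * (2 - 2 * Real.cos α)
      ≤ (b + 1) ^ 2 / (b ^ 2 + 2 * b * Real.cos α + 1) - 1 := by
        rw [le_sub_iff_add_le, le_div_iff₀ hD, div_mul_eq_mul_div, div_add_one (by positivity),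
          div_mul_eq_mul_div, div_le_iff₀ (by positivity)]
        nlinarith [sq_nonneg (b * (2 - 2 * Real.cos α))]
    _ ≤ d * (b ^ 2 - 1) / (b ^ 2 + 2 * b * Real.cos α + 1) - 1 := by
        gcongr
        nlinarith

theorem le_norm_exp_orbitAngle_sub_one_or (hb : 1 < b) {θ r : ℝ} (hθ : r ≤ ‖exp (θ * I) - 1‖)
    (n : ℕ) :
    r / (d + 1) ≤ ‖exp (orbitAngle d b (n + 1) θ * I) - 1‖ ∨
      r / (d + 1) ≤ ‖exp (orbitAngle d b (n + 2) θ * I) - 1‖ := by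
  by_contra! h
  have hnext := fIsing_iterate_one (d := d) hb θ (n + 2)
  rw [Function.iterate_succ_apply', fIsing_iterate_one hb θ (n + 1)] at hnext
  have key := norm_sub_one_le_fIsing (d := d) hb (Complex.norm_exp_ofReal_mul_I θ)
    (Complex.norm_exp_ofReal_mul_I (orbitAngle d b (n + 1) θ))
  rw [hnext] at key
  have hd1 : (0 : ℝ) < d + 1 := by positivity
  have : r = r / (d + 1) + d * (r / (d + 1)) := by field_simp; ring
  nlinarith [mul_le_mul_of_nonneg_left h.1.le (Nat.cast_nonneg d)]

theorem exists_forall_orbitAngleDeriv_ge (hb : 1 < b) (hd : b + 1 ≤ d * (b - 1)) {r : ℝ}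
    (hr : 0 < r) : ∃ β > 0, ∀ θ : ℝ, r ≤ ‖exp (θ * I) - 1‖ →
      ∀ k : ℕ, 1 + k * β ≤ orbitAngleDeriv d b (2 * k + 3) θ := by
  set κ := b / (b + 1) ^ 2
  have hκ : 0 < κ := by positivity
  refine ⟨κ * (r / (d + 1)) ^ 2 * min 1 (κ * r ^ 2), by positivity, fun θ hθ k => ?_⟩
  set p : ℕ → ℝ := fun n => stepExpansion d b (orbitAngle d b n θ)
  have hp : ∀ n, κ * ‖exp (orbitAngle d b n θ * I) - 1‖ ^ 2 ≤ p n :=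
    fun n => stepExpansion_ge hb hd _
  have hp_ge {n : ℕ} {s : ℝ} (hs : 0 ≤ s) (h : s ≤ ‖exp (orbitAngle d b n θ * I) - 1‖) :
      κ * s ^ 2 ≤ p n :=
    (mul_le_mul_of_nonneg_left (pow_le_pow_left₀ hs h 2) hκ.le).trans (hp n)
  have hp1 : κ * r ^ 2 ≤ p 1 := hp_ge hr.le (by rwa [orbitAngle_one])
  have hgrowth := le_of_one_sub_mul_recurrence (a := fun n => orbitAngleDeriv d b n θ) (p := p)
    (fun n => rfl) (fun n => (by positivity : (0 : ℝ) ≤ _).trans (hp n)) rfl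
    (δ := κ * (r / (d + 1)) ^ 2) (by positivity)
    (fun n => (le_norm_exp_orbitAngle_sub_one_or hb hθ n).imp (hp_ge (by positivity))
      (hp_ge (by positivity))) k
  have hmin : min 1 (κ * r ^ 2) ≤ min 1 (p 1) := min_le_min_left 1 hp1
  nlinarith [mul_le_mul_of_nonneg_left hmin (by positivity : 0 ≤ k * (κ * (r / (d + 1)) ^ 2)),
    (by positivity : 0 ≤ κ * r ^ 2)]

theorem exists_mem_Icc_exp_mul_I_eq_neg_one {A : ℝ → ℝ} {x y : ℝ} (hxy : x ≤ y)
    (hA : ContinuousOn A (Set.Icc x y)) (h : A x + 2 * π ≤ A y) :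
    ∃ θ ∈ Set.Icc x y, exp (A θ * I) = -1 := by
  have ht := toIcoMod_mem_Ico Real.two_pi_pos (A x) π
  obtain ⟨θ, hθ, hAθ⟩ := intermediate_value_Icc hxy hA ⟨ht.1, by linarith [ht.2]⟩
  refine ⟨θ, hθ, ?_⟩
  rw [hAθ, ← self_sub_toIcoDiv_zsmul, zsmul_eq_mul]
  push_cast
  rw [sub_mul, Complex.exp_sub, mul_assoc, Complex.exp_int_mul_two_pi_mul_I,
    Complex.exp_pi_mul_I, div_one]

theorem exists_mem_Icc_exp_orbitAngle_eq_neg_one (hb : 1 < b) (hd : b + 1 ≤ d * (b - 1))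
    {x y r : ℝ} (hxy : x < y) (hr : 0 < r) (hI : ∀ θ ∈ Set.Icc x y, r ≤ ‖exp (θ * I) - 1‖) :
    ∃ θ ∈ Set.Icc x y, ∃ n, 1 ≤ n ∧ exp (orbitAngle d b n θ * I) = -1 := by
  obtain ⟨β, hβ, hderiv⟩ := exists_forall_orbitAngleDeriv_ge hb hd hr
  obtain ⟨k, hk⟩ := exists_nat_ge (2 * π / (β * (y - x)))
  have hdiff : Differentiable ℝ (orbitAngle d b (2 * k + 3)) :=
    fun θ => (hasDerivAt_orbitAngle hb _ θ).differentiableAt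
  have hmvt := (convex_Icc x y).mul_sub_le_image_sub_of_le_deriv hdiff.continuous.continuousOn
    hdiff.differentiableOn (C := k * β) (fun θ hθ => by
      rw [(hasDerivAt_orbitAngle hb _ θ).deriv]
      linarith [hderiv θ (hI θ (interior_subset hθ)) k])
    x (Set.left_mem_Icc.2 hxy.le) y (Set.right_mem_Icc.2 hxy.le) hxy.le
  have hlen : 2 * π ≤ k * β * (y - x) := by
    rwa [div_le_iff₀ (mul_pos hβ (sub_pos.2 hxy)), ← mul_assoc] at hk
  obtain ⟨θ, hθ, hθI⟩ := exists_mem_Icc_exp_mul_I_eq_neg_one hxy.le hdiff.continuous.continuousOn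
    (by linarith)
  exact ⟨θ, hθ, 2 * k + 3, by omega, hθI⟩

theorem dense_setOf_exp_orbitAngle_eq_neg_one (hb : 1 < b) (hd : b + 1 ≤ d * (b - 1)) :
    Dense {θ : ℝ | ∃ n, 1 ≤ n ∧ exp (orbitAngle d b n θ * I) = -1} := by
  have hcount : {θ : ℝ | exp (θ * I) = 1}.Countable := by
    refine (Set.countable_range fun n : ℤ => n * (2 * π)).mono fun θ hθ => ?_
    obtain ⟨n, hn⟩ := Complex.exp_eq_one_iff.mp hθ
    have : (θ : ℂ) = ((n * (2 * π) : ℝ) : ℂ) := by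
      push_cast
      exact mul_right_cancel₀ Complex.I_ne_zero (hn.trans (by ring))
    exact ⟨n, (Complex.ofReal_injective this).symm⟩
  refine dense_closure.mp ((hcount.dense_compl ℝ).mono fun c hc => ?_)
  have hc : 0 < ‖exp (c * I) - 1‖ := norm_pos_iff.mpr (sub_ne_zero.mpr hc)
  have hnear : ∀ᶠ θ : ℝ in 𝓝 c, ‖exp (c * I) - 1‖ / 2 < ‖exp (θ * I) - 1‖ :=
    (by fun_prop : Continuous fun θ : ℝ => ‖exp (θ * I) - 1‖).continuousAt.eventually
      (lt_mem_nhds (half_lt_self hc))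
  obtain ⟨δ, hδ, hball⟩ := Metric.eventually_nhds_iff.mp hnear
  refine Metric.mem_closure_iff.mpr fun ε hε => ?_
  obtain ⟨ρ, hρ, hρδ, hρε⟩ : ∃ ρ, 0 < ρ ∧ ρ < δ ∧ ρ < ε :=
    ⟨min δ ε / 2, by positivity, (half_lt_self (lt_min hδ hε)).trans_le (min_le_left _ _),
      (half_lt_self (lt_min hδ hε)).trans_le (min_le_right _ _)⟩
  have hdist {θ : ℝ} (hθ : θ ∈ Set.Icc c (c + ρ)) : dist θ c ≤ ρ := by
    rw [Real.dist_eq, abs_of_nonneg (by linarith [hθ.1])]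
    linarith [hθ.2]
  obtain ⟨θ, hθ, hT⟩ := exists_mem_Icc_exp_orbitAngle_eq_neg_one hb hd (by linarith) (half_pos hc)
    fun θ hθ => (hball ((hdist hθ).trans_lt hρδ)).le
  exact ⟨θ, hT, by rw [dist_comm]; exact (hdist hθ).trans_lt hρε⟩

end IsingCircle

/-- For `d ≥ 2` and `b ≥ (d+1)/(d−1)`, the zero parameters on the unit circle
(of the anti-ferromagnetic Ising partition function of rooted Cayley trees of
down-degree `d`), i.e. the `λ ∈ S¹` with `f_λ^n(1) = −1` for some `n ≥ 1`,
are dense in the unit circle. -/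
theorem stmt0 (d : ℕ) (hd : 2 ≤ d) (b : ℝ)
    (hb : ((d : ℝ) + 1) / ((d : ℝ) - 1) ≤ b) :
    Metric.sphere (0 : ℂ) 1 ⊆
      closure {lam : ℂ | lam ∈ Metric.sphere (0 : ℂ) 1 ∧
        ∃ n : ℕ, 1 ≤ n ∧ (fIsing d b lam)^[n] 1 = -1} := by
  have hd1 : (0 : ℝ) < d - 1 := by
    have : (2 : ℝ) ≤ d := by exact_mod_cast hd
    linarith
  have hb1 : 1 < b := lt_of_lt_of_le ((one_lt_div hd1).mpr (by linarith)) hb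
  have hq : b + 1 ≤ d * (b - 1) := by
    rw [div_le_iff₀ hd1] at hb
    linarith
  intro lam hlam
  have hlam_exp : exp (arg lam * I) = lam := by
    simpa [mem_sphere_zero_iff_norm.mp hlam] using Complex.norm_mul_exp_arg_mul_I lam
  have hmem : lam ∈ (fun θ : ℝ => exp (θ * I)) ''
      closure {θ : ℝ | ∃ n, 1 ≤ n ∧ exp (IsingCircle.orbitAngle d b n θ * I) = -1} := by
    rw [(IsingCircle.dense_setOf_exp_orbitAngle_eq_neg_one hb1 hq).closure_eq]
    exact ⟨arg lam, Set.mem_univ _, hlam_exp⟩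
  refine closure_mono ?_ (image_closure_subset_closure_image (by fun_prop) hmem)
  rintro _ ⟨θ, ⟨n, hn, hθ⟩, rfl⟩
  exact ⟨by simp, n, hn, by rw [IsingCircle.fIsing_iterate_one hb1, hθ]⟩
end

section
/- Let d ≥ 2 be an integer and b > 1 a real number. For a finite nonempty word w = (k_1,…,k_n) with k_j ∈ {1,…,d} and λ ∈ ℂ, let f_{λ,w} denote the composition f_{λ,k_n} ∘ ⋯ ∘ f_{λ,k_1}. Then the set of λ ∈ ℂ for which there exist two distinct finite nonempty words w₁ ≠ w₂ over {1,…,d} such that f_{λ,w₁}(z) = f_{λ,w₂}(z) for every z ∈ ℂ at which both compositions are defined (i.e. no intermediate denominator vanishes) is countable. In particular, for all but countably many λ ∈ ℂ the semigroup generated by f_{λ,1}, …, f_{λ,d} under composition is freely generated by these maps. -/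
open Complex

/-- The semigroup generator `f_{λ,k}(z) = λ·((z+b)/(bz+1))^k`. -/
noncomputable def fl (b : ℝ) (lam : ℂ) (k : ℕ) (z : ℂ) : ℂ :=
  lam * ((z + (b : ℂ)) / ((b : ℂ) * z + 1)) ^ k

/-- The composition `f_{λ,k_n} ∘ ⋯ ∘ f_{λ,k_1}` applied to `z`, for the word `l = [k₁,…,kₙ]`. -/
noncomputable def sgComp (b : ℝ) (lam : ℂ) (l : List ℕ) (z : ℂ) : ℂ :=
  l.foldl (fun w k => fl b lam k w) z

/-- The composition along the word `l` is defined at `z`: no intermediate denominator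
vanishes. -/
def sgDefined (b : ℝ) (lam : ℂ) : List ℕ → ℂ → Prop
  | [], _ => True
  | k :: l, z => (b : ℂ) * z + 1 ≠ 0 ∧ sgDefined b lam l (fl b lam k z)


/-!
Fix a base point `z₀`. Iterating `(N, D) ↦ (λ (N + b D)^k, (b N + D)^k)` on pairs of polynomials
in `λ` writes `f_{λ,w}(z₀)` as `N_w(λ) / D_w(λ)`. If two words give the same map for some `λ`,
then `λ` is a root either of one of the countably many denominators `b N_q + D_q` met along a
word `q`, or of `N_{w₁} D_{w₂} - N_{w₂} D_{w₁}`. All these polynomials are nonzero because of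
one real parameter `λ₀` at which every composition is defined and distinct words have distinct
values at `z₀`. This is a ping-pong argument: with `m(x) = (x + b) / (b x + 1)`, choose `x₀`
so large that `(b m(x))^d < b` for `x ≥ x₀` (as `b m(x) ↓ 1`) and put `λ₀ = b^d x₀`.
Then `x ↦ λ₀ m(x)^k` maps `[x₀, ∞)` injectively into `(λ₀ / b^k, λ₀ b / b^k)`, and these
intervals are pairwise disjoint for `1 ≤ k ≤ d` and do not contain `x₀`.
-/

open Set Filter Topology Polynomial

section PingPong

variable {ι α : Type*} {g : ι → α → α} {K : Set ι} {D : Set α} {A : ι → Set α} {x₀ : α}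

theorem injOn_foldr_of_pingpong (hx₀ : x₀ ∈ D) (hx₀A : ∀ k ∈ K, x₀ ∉ A k)
    (hmaps : ∀ k ∈ K, MapsTo (g k) D (A k)) (hAD : ∀ k ∈ K, A k ⊆ D)
    (hdisj : K.PairwiseDisjoint A) (hinj : ∀ k ∈ K, InjOn (g k) D) :
    InjOn (fun w : List ι => w.foldr g x₀) {w | ∀ k ∈ w, k ∈ K} := by
  have hmem : ∀ w : List ι, (∀ k ∈ w, k ∈ K) → w.foldr g x₀ ∈ D := by
    intro w hw
    induction w with
    | nil => exact hx₀
    | cons k w ih =>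
      have hk := hw k (by simp)
      exact hAD k hk (hmaps k hk (ih fun j hj => hw j (by simp [hj])))
  intro w₁ hw₁ w₂ hw₂ heq
  induction w₁ generalizing w₂ with
  | nil =>
    rcases w₂ with _ | ⟨j, v⟩
    · rfl
    simp only [mem_ofPred_eq, List.mem_cons, forall_eq_or_imp] at hw₂
    dsimp only [List.foldr_cons, List.foldr_nil] at heq
    exact (hx₀A j hw₂.1 (heq ▸ hmaps j hw₂.1 (hmem v hw₂.2))).elim
  | cons k w ih =>
    simp only [mem_ofPred_eq, List.mem_cons, forall_eq_or_imp] at hw₁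
    rcases w₂ with _ | ⟨j, v⟩
    · dsimp only [List.foldr_cons, List.foldr_nil] at heq
      exact (hx₀A k hw₁.1 (heq ▸ hmaps k hw₁.1 (hmem w hw₁.2))).elim
    simp only [mem_ofPred_eq, List.mem_cons, forall_eq_or_imp] at hw₂
    dsimp only [List.foldr_cons] at heq
    obtain rfl : k = j := by
      by_contra hne
      exact Set.disjoint_left.1 (hdisj hw₁.1 hw₂.1 hne)
        (hmaps k hw₁.1 (hmem w hw₁.2)) (heq ▸ hmaps j hw₂.1 (hmem v hw₂.2))
    rw [ih hw₁.2 hw₂.2 (hinj k hw₁.1 (hmem w hw₁.2) (hmem v hw₂.2) heq)]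

theorem injOn_foldl_of_pingpong (hx₀ : x₀ ∈ D) (hx₀A : ∀ k ∈ K, x₀ ∉ A k)
    (hmaps : ∀ k ∈ K, MapsTo (g k) D (A k)) (hAD : ∀ k ∈ K, A k ⊆ D)
    (hdisj : K.PairwiseDisjoint A) (hinj : ∀ k ∈ K, InjOn (g k) D) :
    InjOn (fun w : List ι => w.foldl (fun x k => g k x) x₀) {w | ∀ k ∈ w, k ∈ K} := by
  intro w₁ hw₁ w₂ hw₂ heq
  simp only [List.foldl_eq_foldr_reverse] at heq
  exact List.reverse_injective <| injOn_foldr_of_pingpong hx₀ hx₀A hmaps hAD hdisj hinj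
    (by simpa using hw₁) (by simpa using hw₂) heq

end PingPong

section Mobius

variable {b : ℝ}

noncomputable def mobius (b x : ℝ) : ℝ := (x + b) / (b * x + 1)

lemma mobius_pos (hb : 0 < b) {x : ℝ} (hx : 0 ≤ x) : 0 < mobius b x := by
  unfold mobius; positivity

lemma mobius_strictAntiOn (hb : 1 < b) : StrictAntiOn (mobius b) (Ici 0) := by
  intro x hx y hy hxy
  rw [mem_Ici] at hx hy
  rw [mobius, mobius, div_lt_div_iff₀ (by positivity) (by positivity)]
  nlinarith [mul_pos (show (0 : ℝ) < b ^ 2 - 1 by nlinarith) (sub_pos.2 hxy)]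

lemma one_lt_mul_mobius (hb : 1 < b) {x : ℝ} (hx : 0 ≤ x) : 1 < b * mobius b x := by
  rw [mobius, mul_div_assoc', one_lt_div (by positivity)]
  nlinarith

lemma tendsto_mul_mobius_atTop (hb : 1 < b) : Tendsto (fun x => b * mobius b x) atTop (𝓝 1) := by
  have hden : Tendsto (fun x : ℝ => b * x + 1) atTop atTop :=
    tendsto_atTop_add_const_right _ 1 (tendsto_id.const_mul_atTop (by linarith))
  have hlim := (tendsto_const_nhds (x := b ^ 2 - 1)).div_atTop hden
  rw [← add_zero (1 : ℝ)]
  refine (tendsto_const_nhds.add hlim).congr' ?_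
  filter_upwards [eventually_ge_atTop 0] with x hx
  rw [mobius]
  field_simp
  ring

lemma exists_mul_mobius_pow_lt (hb : 1 < b) (d : ℕ) :
    ∃ x₀ > 0, ∀ x ≥ x₀, (b * mobius b x) ^ d < b := by
  have hlim : Tendsto (fun x => (b * mobius b x) ^ d) atTop (𝓝 1) := by
    simpa using (tendsto_mul_mobius_atTop hb).pow d
  obtain ⟨x₀, hx₀⟩ := eventually_atTop.1 (hlim.eventually (gt_mem_nhds hb))
  exact ⟨max x₀ 1, by positivity, fun x hx => hx₀ x (le_of_max_le_left hx)⟩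

lemma injOn_foldl_mul_mobius_pow (hb : 1 < b) {d : ℕ} {x₀ : ℝ} (hx₀ : 0 < x₀)
    (hpow : ∀ x ≥ x₀, (b * mobius b x) ^ d < b) :
    InjOn (fun w : List ℕ => w.foldl (fun x k => b ^ d * x₀ * mobius b x ^ k) x₀)
      {w | ∀ k ∈ w, 1 ≤ k ∧ k ≤ d} := by
  set T := b ^ d * x₀
  have hT : 0 < T := by positivity
  have hx₀le : ∀ k ≤ d, x₀ ≤ T / b ^ k := fun k hk => by
    rw [le_div_iff₀ (by positivity)]
    nlinarith [pow_le_pow_right₀ hb.le hk]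
  refine injOn_foldl_of_pingpong (K := Icc 1 d) (D := Ici x₀)
    (A := fun k => Ioo (T / b ^ k) (T / b ^ k * b)) (mem_Ici.2 le_rfl)
    (fun k hk h => (hx₀le k hk.2).not_gt h.1) ?_ (fun k hk y hy => (hx₀le k hk.2).trans hy.1.le)
    ?_ ?_
  · intro k hk x hx
    have hx0 : 0 ≤ x := hx₀.le.trans hx
    have hbm := one_lt_mul_mobius hb hx0
    have hlow : 1 < (b * mobius b x) ^ k := one_lt_pow₀ hbm (by grind)
    have hup : (b * mobius b x) ^ k < b :=
      (pow_le_pow_right₀ hbm.le hk.2).trans_lt (hpow x hx)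
    have hform : T * mobius b x ^ k = T / b ^ k * (b * mobius b x) ^ k := by
      rw [mul_pow]; field_simp
    have hc : 0 < T / b ^ k := by positivity
    simp only [mem_Ioo, hform]
    exact ⟨lt_mul_of_one_lt_right hc hlow, mul_lt_mul_of_pos_left hup hc⟩
  · intro j hj k hk hne
    wlog hjk : j < k generalizing j k
    · exact (this hk hj hne.symm (by omega)).symm
    have hsep : T / b ^ k * b ≤ T / b ^ j := by
      rw [div_mul_eq_mul_div, div_le_div_iff₀ (by positivity) (by positivity), mul_assoc,
        ← pow_succ']
      exact mul_le_mul_of_nonneg_left (pow_le_pow_right₀ hb.le hjk) hT.le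
    exact Set.disjoint_left.2 fun y hyj hyk => (hyk.2.trans_le hsep).not_gt hyj.1
  · intro k hk
    refine StrictAntiOn.injOn fun x hx y hy hxy => mul_lt_mul_of_pos_left ?_ hT
    have hx0 : (0 : ℝ) ≤ x := hx₀.le.trans hx
    exact pow_lt_pow_left₀ (mobius_strictAntiOn hb hx0 (hx0.trans hxy.le) hxy)
      (mobius_pos (zero_lt_one.trans hb) (hx0.trans hxy.le)).le (by grind)

end Mobius

lemma fl_ofReal (b T : ℝ) (k : ℕ) (x : ℝ) : fl b T k x = ↑(T * mobius b x ^ k) := by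
  simp [fl, mobius]

lemma sgComp_ofReal (b T : ℝ) (w : List ℕ) (x : ℝ) :
    sgComp b T w x = ↑(w.foldl (fun x k => T * mobius b x ^ k) x) := by
  induction w generalizing x with
  | nil => rfl
  | cons k w ih => exact (congrArg (sgComp b T w) (fl_ofReal b T k x)).trans (ih _)

lemma sgDefined_ofReal {b T : ℝ} (hb : 0 ≤ b) (hT : 0 ≤ T) (w : List ℕ) {x : ℝ} (hx : 0 ≤ x) :
    sgDefined b T w x := by
  induction w generalizing x with
  | nil => trivial
  | cons k w ih =>
    refine ⟨by exact_mod_cast (by positivity : b * x + 1 ≠ 0), ?_⟩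
    rw [fl_ofReal]
    exact ih (by unfold mobius; positivity)

lemma exists_sgDefined_injOn_sgComp {b : ℝ} (hb : 1 < b) (d : ℕ) :
    ∃ lam₀ z₀ : ℂ, (∀ w, sgDefined b lam₀ w z₀) ∧
      InjOn (fun w => sgComp b lam₀ w z₀) {w | ∀ k ∈ w, 1 ≤ k ∧ k ≤ d} := by
  obtain ⟨x₀, hx₀, hpow⟩ := exists_mul_mobius_pow_lt hb d
  refine ⟨↑(b ^ d * x₀), x₀, fun w => sgDefined_ofReal (by positivity) (by positivity) w hx₀.le,
    fun w₁ hw₁ w₂ hw₂ heq => injOn_foldl_mul_mobius_pow hb hx₀ hpow hw₁ hw₂ ?_⟩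
  simpa only [sgComp_ofReal, Complex.ofReal_inj] using heq

section RationalFunctionsOfLambda

variable {b : ℝ} {p p₁ p₂ : ℂ[X] × ℂ[X]} {lam lam₀ z z₀ z₁ z₂ : ℂ}

noncomputable def denPoly (b : ℝ) (p : ℂ[X] × ℂ[X]) : ℂ[X] := C (b : ℂ) * p.1 + p.2

noncomputable def flPair (b : ℝ) (k : ℕ) (p : ℂ[X] × ℂ[X]) : ℂ[X] × ℂ[X] :=
  (X * (p.1 + C (b : ℂ) * p.2) ^ k, denPoly b p ^ k)

noncomputable def sgCompPair (b : ℝ) (l : List ℕ) (p : ℂ[X] × ℂ[X]) : ℂ[X] × ℂ[X] :=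
  l.foldl (fun q k => flPair b k q) p

def RepresentsAt (p : ℂ[X] × ℂ[X]) (lam z : ℂ) : Prop :=
  p.2.eval lam ≠ 0 ∧ p.1.eval lam = z * p.2.eval lam

lemma sgCompPair_append_singleton (l : List ℕ) (k : ℕ) (p : ℂ[X] × ℂ[X]) :
    sgCompPair b (l ++ [k]) p = flPair b k (sgCompPair b l p) := by
  simp [sgCompPair]

lemma RepresentsAt.eval_denPoly (h : RepresentsAt p lam z) :
    (denPoly b p).eval lam = p.2.eval lam * (b * z + 1) := by
  simp only [denPoly, eval_add, eval_mul, eval_C, h.2]; ring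

lemma representsAt_flPair (h : RepresentsAt p lam z) (hz : (b : ℂ) * z + 1 ≠ 0) (k : ℕ) :
    RepresentsAt (flPair b k p) lam (fl b lam k z) := by
  refine ⟨?_, ?_⟩
  · simp only [flPair, eval_pow, h.eval_denPoly]
    exact pow_ne_zero _ (mul_ne_zero h.1 hz)
  · simp only [flPair, fl, eval_mul, eval_pow, eval_X, eval_add, eval_C, h.eval_denPoly, h.2]
    rw [mul_assoc, ← mul_pow]
    congr 2
    rw [div_mul_eq_mul_div, eq_div_iff hz]
    ring

lemma representsAt_sgCompPair {l : List ℕ} (h : RepresentsAt p lam z)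
    (hdef : sgDefined b lam l z) : RepresentsAt (sgCompPair b l p) lam (sgComp b lam l z) := by
  induction l generalizing p z with
  | nil => exact h
  | cons k l ih => exact ih (representsAt_flPair h hdef.1 k) hdef.2

lemma sgDefined_of_representsAt {l : List ℕ} (h : RepresentsAt p lam z)
    (hden : ∀ q, (denPoly b (sgCompPair b q p)).eval lam ≠ 0) : sgDefined b lam l z := by
  induction l generalizing p z with
  | nil => trivial
  | cons k l ih =>
    have hz : (b : ℂ) * z + 1 ≠ 0 := right_ne_zero_of_mul (h.eval_denPoly ▸ hden [])
    exact ⟨hz, ih (representsAt_flPair h hz k) fun q => hden (k :: q)⟩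

lemma RepresentsAt.eval_cross (h₁ : RepresentsAt p₁ lam z₁) (h₂ : RepresentsAt p₂ lam z₂) :
    (p₁.1 * p₂.2 - p₂.1 * p₁.2).eval lam = (z₁ - z₂) * (p₁.2.eval lam * p₂.2.eval lam) := by
  simp only [eval_sub, eval_mul, h₁.2, h₂.2]; ring

lemma countable_setOf_exists_isRoot_denPoly (h : RepresentsAt p lam₀ z₀)
    (hdef : ∀ w, sgDefined b lam₀ w z₀) :
    {lam | ∃ q, (denPoly b (sgCompPair b q p)).IsRoot lam}.Countable := by
  simp only [ofPred_exists]
  refine countable_iUnion fun q => (finite_setOfPred_isRoot fun h0 => ?_).countable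
  have hne := (representsAt_sgCompPair h (hdef (q ++ [1]))).1
  simp [sgCompPair_append_singleton, flPair, h0] at hne

lemma countable_setOf_sgComp_eq (hdef : ∀ w, sgDefined b lam₀ w z₀) {w₁ w₂ : List ℕ}
    (hne : sgComp b lam₀ w₁ z₀ ≠ sgComp b lam₀ w₂ z₀) :
    {lam | ∀ z, sgDefined b lam w₁ z → sgDefined b lam w₂ z →
      sgComp b lam w₁ z = sgComp b lam w₂ z}.Countable := by
  let p₀ : ℂ[X] × ℂ[X] := (C z₀, 1)
  have hp₀ : ∀ lam, RepresentsAt p₀ lam z₀ := fun lam => by simp [RepresentsAt, p₀]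
  let E := (sgCompPair b w₁ p₀).1 * (sgCompPair b w₂ p₀).2 -
    (sgCompPair b w₂ p₀).1 * (sgCompPair b w₁ p₀).2
  have hE : E ≠ 0 := fun h0 => by
    have h₁ := representsAt_sgCompPair (hp₀ lam₀) (hdef w₁)
    have h₂ := representsAt_sgCompPair (hp₀ lam₀) (hdef w₂)
    have hcross : E.eval lam₀ = _ := h₁.eval_cross h₂
    rw [h0, eval_zero, eq_comm, mul_eq_zero, sub_eq_zero] at hcross
    exact hcross.elim hne (mul_ne_zero h₁.1 h₂.1)
  refine ((finite_setOfPred_isRoot hE).countable.union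
    (countable_setOf_exists_isRoot_denPoly (hp₀ lam₀) hdef)).mono fun lam hlam => ?_
  by_cases hroot : ∃ q, (denPoly b (sgCompPair b q p₀)).IsRoot lam
  · exact Or.inr hroot
  push Not at hroot
  have hdef' : ∀ w, sgDefined b lam w z₀ := fun w => sgDefined_of_representsAt (hp₀ lam) hroot
  have hrep : ∀ w, RepresentsAt (sgCompPair b w p₀) lam (sgComp b lam w z₀) := fun w =>
    representsAt_sgCompPair (hp₀ lam) (hdef' w)
  have hcross : E.eval lam = _ := (hrep w₁).eval_cross (hrep w₂)
  rw [hlam z₀ (hdef' w₁) (hdef' w₂), sub_self, zero_mul] at hcross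
  exact Or.inl hcross

end RationalFunctionsOfLambda

theorem stmt7_general (d : ℕ) (b : ℝ) (hb : 1 < b) :
    Set.Countable {lam : ℂ | ∃ w₁ w₂ : List ℕ, w₁ ≠ [] ∧ w₂ ≠ [] ∧
      (∀ k ∈ w₁, 1 ≤ k ∧ k ≤ d) ∧ (∀ k ∈ w₂, 1 ≤ k ∧ k ≤ d) ∧ w₁ ≠ w₂ ∧
      ∀ z : ℂ, sgDefined b lam w₁ z → sgDefined b lam w₂ z →
        sgComp b lam w₁ z = sgComp b lam w₂ z} := by
  obtain ⟨lam₀, z₀, hdef, hinj⟩ := exists_sgDefined_injOn_sgComp hb d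
  let admissible : Set (List ℕ × List ℕ) :=
    {w | (∀ k ∈ w.1, 1 ≤ k ∧ k ≤ d) ∧ (∀ k ∈ w.2, 1 ≤ k ∧ k ≤ d) ∧ w.1 ≠ w.2}
  refine (admissible.to_countable.biUnion fun w hw =>
    countable_setOf_sgComp_eq hdef (hinj.ne hw.1 hw.2.1 hw.2.2)).mono ?_
  rintro lam ⟨w₁, w₂, -, -, h₁, h₂, hne, heq⟩
  exact mem_biUnion (x := (w₁, w₂)) ⟨h₁, h₂, hne⟩ heq

/-- Let `d ≥ 2` and `b > 1`.  The set of parameters `λ ∈ ℂ` for which two distinct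
nonempty words over `{1,…,d}` give the same composed rational map (wherever both are
defined) is countable; hence for all but countably many `λ` the semigroup generated by
`f_{λ,1},…,f_{λ,d}` is free. -/
theorem stmt7 (d : ℕ) (hd : 2 ≤ d) (b : ℝ) (hb : 1 < b) :
    Set.Countable {lam : ℂ | ∃ w₁ w₂ : List ℕ, w₁ ≠ [] ∧ w₂ ≠ [] ∧
      (∀ k ∈ w₁, 1 ≤ k ∧ k ≤ d) ∧ (∀ k ∈ w₂, 1 ≤ k ∧ k ≤ d) ∧ w₁ ≠ w₂ ∧
      ∀ z : ℂ, sgDefined b lam w₁ z → sgDefined b lam w₂ z →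
        sgComp b lam w₁ z = sgComp b lam w₂ z} :=
  stmt7_general d b hb
end

section
/- Let d ≥ 2 be an integer, m ∈ {1, …, d−1}, t ∈ (0,1) and s ∈ (0,t) real numbers. Then there exists k ∈ {1, …, d−1} such that the number A_k = ((2m − s)/d)·k + t, when reduced modulo 2 to a representative in [0,2), lies in the open interval (1,2). -/
/-!
Write `α = (2m - s)/d ∈ (0, 2)` and `x k = α k + t`, so that `x (d - 1) = 2m - (s - t) - α`.
If `α < 1`, the sequence climbs from `t < 1` to `x (d - 1) > 2m - 1 ≥ 1` in steps shorter than
`1`, so it lands in `(1, 2)` on the way. If `α > 1`, the sequence `2k - x k` climbs from `-t < 0`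
to `2(d - 1 - m) + α - (t - s) > 0` in steps `2 - α < 1`, so it lands in `(0, 1)`, i.e.
`x k ∈ (2k - 1, 2k)`. If `α = 1`, then `x 1 = 1 + t`.
-/

noncomputable def modTwo (x : ℝ) : ℝ := x - 2 * ⌊x / 2⌋

lemma modTwo_mem_Ioo_one_two {x : ℝ} {j : ℤ} (h₁ : 2 * j + 1 < x) (h₂ : x < 2 * j + 2) :
    modTwo x ∈ Set.Ioo 1 2 := by
  have hfloor : ⌊x / 2⌋ = j := Int.floor_eq_iff.mpr ⟨by linarith, by linarith⟩
  rw [modTwo, hfloor]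
  constructor <;> linarith

lemma exists_le_and_lt_succ_of_le_of_lt {x : ℕ → ℝ} {L : ℝ} {n : ℕ}
    (h₀ : x 0 ≤ L) (hn : L < x n) :
    ∃ k < n, x k ≤ L ∧ L < x (k + 1) := by
  induction n with
  | zero => exact absurd h₀ (not_le.mpr hn)
  | succ n ih =>
    by_cases hle : x n ≤ L
    · exact ⟨n, Nat.lt_succ_self n, hle, hn⟩
    · obtain ⟨k, hk, hxk⟩ := ih (not_le.mp hle)
      exact ⟨k, hk.trans (Nat.lt_succ_self n), hxk⟩

section Rotation

variable {α t : ℝ} {n : ℕ}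

lemma exists_modTwo_mem_Ioo_of_lt_one (hα : α < 1) (ht : t ≤ 1) (hn : 1 < α * n + t) :
    ∃ k : ℕ, 1 ≤ k ∧ k ≤ n ∧ modTwo (α * k + t) ∈ Set.Ioo 1 2 := by
  obtain ⟨k, hk, hle, hlt⟩ :=
    exists_le_and_lt_succ_of_le_of_lt (x := fun k : ℕ ↦ α * k + t) (by simpa using ht) hn
  refine ⟨k + 1, by omega, hk, modTwo_mem_Ioo_one_two (j := 0) ?_ ?_⟩
  · simpa using hlt
  · push_cast at hle ⊢
    linarith

lemma exists_modTwo_mem_Ioo_of_one_lt (hα : 1 < α) (ht : 0 ≤ t) (hn : t < (2 - α) * n) :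
    ∃ k : ℕ, 1 ≤ k ∧ k ≤ n ∧ modTwo (α * k + t) ∈ Set.Ioo 1 2 := by
  obtain ⟨k, hk, hle, hlt⟩ :=
    exists_le_and_lt_succ_of_le_of_lt (x := fun k : ℕ ↦ (2 - α) * k - t) (L := 0)
      (by simpa using ht) (by linarith)
  refine ⟨k + 1, by omega, hk, modTwo_mem_Ioo_one_two (j := k) ?_ ?_⟩
  all_goals push_cast at hle hlt ⊢; linarith

end Rotation

theorem stmt8_general (d : ℕ) (m : ℕ) (hm1 : 1 ≤ m) (hm2 : m ≤ d - 1)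
    (t s : ℝ) (ht0 : 0 < t) (ht1 : t < 1) (hs0 : 0 < s) (hst : s < t) :
    ∃ k : ℕ, 1 ≤ k ∧ k ≤ d - 1 ∧
      (1 : ℝ) < ((2 * (m : ℝ) - s) / (d : ℝ)) * (k : ℝ) + t -
        2 * (⌊(((2 * (m : ℝ) - s) / (d : ℝ)) * (k : ℝ) + t) / 2⌋ : ℝ) ∧
      ((2 * (m : ℝ) - s) / (d : ℝ)) * (k : ℝ) + t -
        2 * (⌊(((2 * (m : ℝ) - s) / (d : ℝ)) * (k : ℝ) + t) / 2⌋ : ℝ) < 2 := by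
  set α := (2 * (m : ℝ) - s) / d
  have hm : (1 : ℝ) ≤ m := by exact_mod_cast hm1
  have hn : ((d - 1 : ℕ) : ℝ) = d - 1 := by rw [Nat.cast_sub (by omega), Nat.cast_one]
  have hmd : (m : ℝ) ≤ d - 1 := hn ▸ (by exact_mod_cast hm2)
  have hαd : α * (d - 1 : ℝ) = 2 * m - s - α := by
    rw [mul_sub, mul_one, div_mul_cancel₀ _ (by linarith)]
  rcases lt_trichotomy α 1 with hα | hα | hα
  · exact exists_modTwo_mem_Ioo_of_lt_one hα ht1.le (by rw [hn, hαd]; linarith)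
  · exact ⟨1, le_rfl, by omega,
      modTwo_mem_Ioo_one_two (j := 0) (by simp [hα, ht0]) (by simp [hα]; linarith)⟩
  · exact exists_modTwo_mem_Ioo_of_one_lt hα ht0.le (by rw [hn, sub_mul, hαd]; linarith)

/-- Let `d ≥ 2`, `m ∈ {1,…,d−1}`, `t ∈ (0,1)` and `s ∈ (0,t)`.  Then there is
`k ∈ {1,…,d−1}` such that `A_k = ((2m−s)/d)·k + t`, reduced modulo 2 to its
representative in `[0,2)`, lies in the open interval `(1,2)`. -/
theorem stmt8 (d : ℕ) (hd : 2 ≤ d) (m : ℕ) (hm1 : 1 ≤ m) (hm2 : m ≤ d - 1)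
    (t s : ℝ) (ht0 : 0 < t) (ht1 : t < 1) (hs0 : 0 < s) (hst : s < t) :
    ∃ k : ℕ, 1 ≤ k ∧ k ≤ d - 1 ∧
      (1 : ℝ) < ((2 * (m : ℝ) - s) / (d : ℝ)) * (k : ℝ) + t -
        2 * (⌊(((2 * (m : ℝ) - s) / (d : ℝ)) * (k : ℝ) + t) / 2⌋ : ℝ) ∧
      ((2 * (m : ℝ) - s) / (d : ℝ)) * (k : ℝ) + t -
        2 * (⌊(((2 * (m : ℝ) - s) / (d : ℝ)) * (k : ℝ) + t) / 2⌋ : ℝ) < 2 :=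
  stmt8_general d m hm1 hm2 t s ht0 ht1 hs0 hst
end

section
/- Let d ≥ 2 be an integer and λ ∈ S¹. If b > (d+1)/(d−1), then f_λ is uniformly expanding on the unit circle: for every z ∈ S¹, |f'_λ(z)| ≥ d(b−1)/(b+1) > 1. If b = (d+1)/(d−1), then f_λ is expanding on the unit circle: |f'_λ(z)| > 1 for every z ∈ S¹ with z ≠ 1, and |f'_λ(1)| = 1. -/
/-!
On `S¹` one has `bz + 1 = z · conj (z + b)`, so the Möbius factor `(z + b)/(bz + 1)` has modulus one
and `|f'_λ(z)| = d(b² − 1)/|bz + 1|²`. Since `|bz + 1|² = (b + 1)² − b|z − 1|²`, the derivative is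
smallest exactly at `z = 1`, where it equals `d(b − 1)/(b + 1)`; this value exceeds `1` precisely
when `b > (d + 1)/(d − 1)` and equals `1` at the threshold.
-/

open Complex

open ComplexConjugate

section UnitCircle

variable {b : ℝ} {z : ℂ}

lemma hasDerivAt_fIsing (d : ℕ) (b : ℝ) (lam : ℂ) (hz : (b : ℂ) * z + 1 ≠ 0) :
    HasDerivAt (fIsing d b lam)
      (lam * (d * ((z + b) / (b * z + 1)) ^ (d - 1) * ((1 - b ^ 2) / (b * z + 1) ^ 2))) z := by
  have hnum : HasDerivAt (fun z : ℂ => z + b) 1 z := (hasDerivAt_id z).add_const _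
  have hden : HasDerivAt (fun z : ℂ => b * z + 1) b z := by
    simpa using ((hasDerivAt_id z).const_mul (b : ℂ)).add_const (1 : ℂ)
  exact (((hnum.div hden hz).pow d).const_mul lam).congr_deriv (by simp only [Pi.div_apply]; ring)

lemma ofReal_mul_add_one_eq_mul_conj (hz : ‖z‖ = 1) :
    (b : ℂ) * z + 1 = z * conj (z + b) := by
  have hzz : z * conj z = 1 := by rw [mul_conj, ← Complex.sq_norm, hz]; simp
  rw [map_add, conj_ofReal, mul_add, hzz]
  ring

lemma norm_add_ofReal_eq_norm_ofReal_mul_add_one (hz : ‖z‖ = 1) :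
    ‖z + b‖ = ‖(b : ℂ) * z + 1‖ := by
  rw [ofReal_mul_add_one_eq_mul_conj hz, norm_mul, hz, one_mul, norm_conj]

lemma norm_ofReal_mul_add_one_sq (hz : ‖z‖ = 1) :
    ‖(b : ℂ) * z + 1‖ ^ 2 = (b + 1) ^ 2 - b * ‖z - 1‖ ^ 2 := by
  have hre_im : z.re * z.re + z.im * z.im = 1 := by
    rw [← normSq_apply, ← Complex.sq_norm, hz, one_pow]
  simp only [Complex.sq_norm, normSq_apply, add_re, add_im, mul_re, mul_im, sub_re, sub_im,
    ofReal_re, ofReal_im, one_re, one_im]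
  linear_combination (b ^ 2 + b) * hre_im

lemma norm_ofReal_mul_add_one_sq_le (hb : 0 ≤ b) (hz : ‖z‖ = 1) :
    ‖(b : ℂ) * z + 1‖ ^ 2 ≤ (b + 1) ^ 2 := by
  rw [norm_ofReal_mul_add_one_sq hz]
  have := mul_nonneg hb (sq_nonneg ‖z - 1‖)
  linarith

lemma norm_ofReal_mul_add_one_sq_lt (hb : 0 < b) (hz : ‖z‖ = 1) (hz1 : z ≠ 1) :
    ‖(b : ℂ) * z + 1‖ ^ 2 < (b + 1) ^ 2 := by
  rw [norm_ofReal_mul_add_one_sq hz]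
  have := mul_pos hb (pow_pos (norm_pos_iff.mpr (sub_ne_zero.mpr hz1)) 2)
  linarith

lemma norm_ofReal_mul_add_one_pos (hb : 1 < b) (hz : ‖z‖ = 1) :
    0 < ‖(b : ℂ) * z + 1‖ := by
  have := norm_sub_le_norm_add ((b : ℂ) * z) 1
  rw [norm_mul, norm_real, hz, Real.norm_of_nonneg (by linarith), norm_one] at this
  linarith

lemma norm_deriv_fIsing (d : ℕ) {lam : ℂ} (hlam : ‖lam‖ = 1) (hb : 1 < b) (hz : ‖z‖ = 1) :
    ‖deriv (fIsing d b lam) z‖ = d * (b ^ 2 - 1) / ‖(b : ℂ) * z + 1‖ ^ 2 := by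
  have hden := norm_ofReal_mul_add_one_pos hb hz
  have hquot : ‖(z + b) / (b * z + 1)‖ = 1 := by
    rw [norm_div, norm_add_ofReal_eq_norm_ofReal_mul_add_one hz, div_self hden.ne']
  have hnum : ‖(1 : ℂ) - b ^ 2‖ = b ^ 2 - 1 := by
    rw [← norm_neg, neg_sub, show (b : ℂ) ^ 2 - 1 = ((b ^ 2 - 1 : ℝ) : ℂ) by push_cast; ring,
      norm_real, Real.norm_of_nonneg (by nlinarith)]
  rw [(hasDerivAt_fIsing d b lam (norm_pos_iff.mp hden)).deriv]
  simp only [norm_mul, norm_div, norm_pow, hlam, hquot, hnum, norm_natCast, one_pow, one_mul,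
    mul_one, mul_div_assoc]

lemma mul_sub_one_div_add_one_eq_div_sq (c : ℝ) (hb : b + 1 ≠ 0) :
    c * (b - 1) / (b + 1) = c * (b ^ 2 - 1) / (b + 1) ^ 2 := by
  field_simp
  ring

lemma norm_deriv_fIsing_one (d : ℕ) {lam : ℂ} (hlam : ‖lam‖ = 1) (hb : 1 < b) :
    ‖deriv (fIsing d b lam) 1‖ = d * (b - 1) / (b + 1) := by
  rw [norm_deriv_fIsing d hlam hb (by simp), norm_ofReal_mul_add_one_sq (by simp), sub_self,
    norm_zero, mul_sub_one_div_add_one_eq_div_sq _ (by linarith)]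
  ring_nf

lemma le_norm_deriv_fIsing (d : ℕ) {lam : ℂ} (hlam : ‖lam‖ = 1) (hb : 1 < b) (hz : ‖z‖ = 1) :
    d * (b - 1) / (b + 1) ≤ ‖deriv (fIsing d b lam) z‖ := by
  rw [mul_sub_one_div_add_one_eq_div_sq _ (by linarith), norm_deriv_fIsing d hlam hb hz]
  exact div_le_div_of_nonneg_left (mul_nonneg d.cast_nonneg (by nlinarith))
    (pow_pos (norm_ofReal_mul_add_one_pos hb hz) 2)
    (norm_ofReal_mul_add_one_sq_le (by linarith) hz)

lemma lt_norm_deriv_fIsing {d : ℕ} (hd : d ≠ 0) {lam : ℂ} (hlam : ‖lam‖ = 1) (hb : 1 < b)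
    (hz : ‖z‖ = 1) (hz1 : z ≠ 1) :
    d * (b - 1) / (b + 1) < ‖deriv (fIsing d b lam) z‖ := by
  rw [mul_sub_one_div_add_one_eq_div_sq _ (by linarith), norm_deriv_fIsing d hlam hb hz]
  exact div_lt_div_of_pos_left (mul_pos (by positivity) (by nlinarith))
    (pow_pos (norm_ofReal_mul_add_one_pos hb hz) 2)
    (norm_ofReal_mul_add_one_sq_lt (by linarith) hz hz1)

end UnitCircle

section Threshold

variable {d b : ℝ}

lemma one_lt_add_one_div_sub_one (hd : 1 < d) : 1 < (d + 1) / (d - 1) := by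
  rw [one_lt_div (by linarith)]
  linarith

lemma one_lt_mul_sub_one_div_add_one (hd : 1 < d) (hb : (d + 1) / (d - 1) < b) :
    1 < d * (b - 1) / (b + 1) := by
  have hb1 := (one_lt_add_one_div_sub_one hd).trans hb
  rw [div_lt_iff₀ (by linarith)] at hb
  rw [one_lt_div (by linarith)]
  linarith

lemma mul_sub_one_div_add_one_at_threshold (hd : 1 < d) :
    d * ((d + 1) / (d - 1) - 1) / ((d + 1) / (d - 1) + 1) = 1 := by
  have hd1 : d - 1 ≠ 0 := by linarith
  rw [div_sub_one hd1, div_add_one hd1, mul_div_assoc', div_div_div_cancel_right₀ hd1,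
    div_eq_one_iff_eq]
  · ring
  · linarith

end Threshold

/-- Let `d ≥ 2` and `λ ∈ S¹`.  If `b > (d+1)/(d−1)` then `f_λ` is uniformly expanding
on the unit circle: `|f'_λ(z)| ≥ d(b−1)/(b+1) > 1` for all `z ∈ S¹`.  If
`b = (d+1)/(d−1)` then `f_λ` is expanding: `|f'_λ(z)| > 1` for `z ∈ S¹ \ {1}`, while
`|f'_λ(1)| = 1`. -/
theorem stmt11 (d : ℕ) (hd : 2 ≤ d) (b : ℝ)
    (lam : ℂ) (hlam : lam ∈ Metric.sphere (0 : ℂ) 1) :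
    (((d : ℝ) + 1) / ((d : ℝ) - 1) < b →
      (1 : ℝ) < (d : ℝ) * (b - 1) / (b + 1) ∧
      ∀ z ∈ Metric.sphere (0 : ℂ) 1,
        (d : ℝ) * (b - 1) / (b + 1) ≤ ‖deriv (fIsing d b lam) z‖) ∧
    (b = ((d : ℝ) + 1) / ((d : ℝ) - 1) →
      (∀ z ∈ Metric.sphere (0 : ℂ) 1, z ≠ 1 →
        1 < ‖deriv (fIsing d b lam) z‖) ∧
      ‖deriv (fIsing d b lam) 1‖ = 1) := by
  have hlam : ‖lam‖ = 1 := by simpa using hlam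
  have hd0 : d ≠ 0 := by omega
  have hd : (1 : ℝ) < d := by exact_mod_cast hd
  have hthreshold := one_lt_add_one_div_sub_one hd
  refine ⟨fun hb => ⟨one_lt_mul_sub_one_div_add_one hd hb, fun z hz => ?_⟩, fun hb => ?_⟩
  · exact le_norm_deriv_fIsing d hlam (hthreshold.trans hb) (by simpa using hz)
  · subst hb
    refine ⟨fun z hz hz1 => ?_, ?_⟩
    · have := lt_norm_deriv_fIsing hd0 hlam hthreshold (by simpa using hz) hz1
      rwa [mul_sub_one_div_add_one_at_threshold hd] at this
    · rw [norm_deriv_fIsing_one d hlam hthreshold, mul_sub_one_div_add_one_at_threshold hd]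
end

section
/- Let d ≥ 2 be an integer and b > 1 a real number, and let f_{−1}(z) = −((z+b)/(bz+1))^d. Then there exists a real number z with −1/b < z < 0 such that f_{−1}(f_{−1}(z)) = z and f_{−1}(z) ≠ z; that is, f_{−1} has a periodic point of exact period 2 inside the open unit disk. -/
open Complex

/-!
For real `z ∈ (−1/b, 0]` the Möbius factor `(z+b)/(bz+1)` is at least `b`, so `f = f_{−1}`
sends `(−1/b, 0]` below `−b`. For `w < −b` that factor lies in `(0, 1/b)`, so `f` sends
`(−∞, −b)` into `(−b^{−d}, 0)`. Since `d ≥ 2`, `−b^{−d} > −1/b`, hence `f ∘ f` maps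
`[−b^{−d}, 0]` into its interior and has a fixed point there by the intermediate value
theorem. It is not fixed by `f`, which moves it below `−b`.
-/

open Set

noncomputable def fIsingReal (d : ℕ) (b lam x : ℝ) : ℝ :=
  lam * ((x + b) / (b * x + 1)) ^ d

theorem fIsing_ofReal (d : ℕ) (b lam x : ℝ) :
    fIsing d b lam x = fIsingReal d b lam x := by
  simp only [fIsing, fIsingReal]
  push_cast
  ring

theorem continuousOn_fIsingReal (d : ℕ) (b lam : ℝ) :
    ContinuousOn (fIsingReal d b lam) {x | b * x + 1 ≠ 0} :=
  continuousOn_const.mul <| ((continuous_id.add continuous_const).continuousOn.div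
    (continuous_const.mul continuous_id |>.add continuous_const).continuousOn fun _ hx => hx).pow d

section

variable {b : ℝ} (hb : 1 < b)
include hb

theorem le_mobius_of_mem_Ioc {z : ℝ} (hz : z ∈ Ioc (-1 / b) 0) :
    b ≤ (z + b) / (b * z + 1) := by
  have hden : 0 < b * z + 1 := by
    have := (div_lt_iff₀ (by linarith)).mp hz.1
    linarith
  rw [le_div_iff₀ hden]
  nlinarith [mul_nonneg (show (0 : ℝ) ≤ b * b - 1 by nlinarith) (neg_nonneg.mpr hz.2)]

theorem mobius_mem_Ioo_of_lt_neg {w : ℝ} (hw : w < -b) :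
    (w + b) / (b * w + 1) ∈ Ioo 0 (1 / b) := by
  have hden : b * w + 1 < 0 := by nlinarith
  refine ⟨div_pos_of_neg_of_neg (by linarith) hden, ?_⟩
  rw [div_lt_iff_of_neg hden, show 1 / b * (b * w + 1) = w + 1 / b by field_simp]
  have : 1 / b < b := by rw [div_lt_iff₀ (by linarith)]; nlinarith
  linarith

theorem fIsingReal_lt_neg_of_mem_Ioc {d : ℕ} (hd : 2 ≤ d) {z : ℝ}
    (hz : z ∈ Ioc (-1 / b) 0) :
    fIsingReal d b (-1) z < -b := by
  have := calc
    b < b ^ d := by simpa using pow_lt_pow_right₀ hb (show 1 < d by omega)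
    _ ≤ ((z + b) / (b * z + 1)) ^ d :=
      pow_le_pow_left₀ (by linarith) (le_mobius_of_mem_Ioc hb hz) d
  simp only [fIsingReal]
  linarith

theorem fIsingReal_mem_Ioo_of_lt_neg {d : ℕ} (hd : d ≠ 0) {w : ℝ} (hw : w < -b) :
    fIsingReal d b (-1) w ∈ Ioo (-(1 / b) ^ d) 0 := by
  obtain ⟨hpos, hlt⟩ := mobius_mem_Ioo_of_lt_neg hb hw
  have := pow_lt_pow_left₀ hlt hpos.le hd
  have := pow_pos hpos d
  simp only [fIsingReal, mem_Ioo]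
  constructor <;> linarith

end

/-- Let `d ≥ 2` and `b > 1`.  Then `f_{−1}(z) = −((z+b)/(bz+1))^d` has a periodic
point of exact period 2 in the real interval `(−1/b, 0)` (inside the unit disk). -/
theorem stmt13 (d : ℕ) (hd : 2 ≤ d) (b : ℝ) (hb : 1 < b) :
    ∃ z : ℝ, -1 / b < z ∧ z < 0 ∧
      fIsing d b (-1) (fIsing d b (-1) (z : ℂ)) = (z : ℂ) ∧
      fIsing d b (-1) (z : ℂ) ≠ (z : ℂ) := by
  set f := fIsingReal d b (-1)
  set a := -(1 / b) ^ d
  have hinv : 1 / b ∈ Ioo 0 1 := ⟨by positivity, (div_lt_one (by linarith)).mpr hb⟩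
  have ha : -1 / b < a := by
    rw [neg_div, neg_lt_neg_iff]
    simpa using pow_lt_pow_right_of_lt_one₀ hinv.1 hinv.2 (show 1 < d by omega)
  have ha0 : a < 0 := neg_lt_zero.mpr (pow_pos hinv.1 d)
  have hsub : Icc a 0 ⊆ Ioc (-1 / b) 0 := fun z hz => ⟨ha.trans_le hz.1, hz.2⟩
  have hmaps₁ : MapsTo f (Icc a 0) (Iio (-b)) := fun z hz =>
    fIsingReal_lt_neg_of_mem_Ioc hb hd (hsub hz)
  have hmaps₂ : MapsTo f (Iio (-b)) (Ioo a 0) := fun w hw =>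
    fIsingReal_mem_Ioo_of_lt_neg hb (by omega) hw
  have hcont₁ : ContinuousOn f (Icc a 0) :=
    (continuousOn_fIsingReal d b (-1)).mono fun z hz => by
      have := (div_lt_iff₀ (by linarith)).mp (hsub hz).1
      exact (show 0 < b * z + 1 by linarith).ne'
  have hcont₂ : ContinuousOn f (Iio (-b)) :=
    (continuousOn_fIsingReal d b (-1)).mono fun w (hw : w < -b) =>
      (show b * w + 1 < 0 by nlinarith).ne
  obtain ⟨z, hz, hfix⟩ := exists_mem_Icc_isFixedPt_of_mapsTo (hcont₂.comp hcont₁ hmaps₁)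
    ha0.le ((hmaps₂.comp hmaps₁).mono_right Ioo_subset_Icc_self)
  have hzIoo : z ∈ Ioo a 0 := hfix ▸ hmaps₂.comp hmaps₁ hz
  have hfz : f z < -b := hmaps₁ hz
  have hcast (x : ℝ) : fIsing d b (-1) x = f x := by
    rw [← ofReal_one, ← ofReal_neg]; exact fIsing_ofReal d b (-1) x
  refine ⟨z, ha.trans hzIoo.1, hzIoo.2, by rw [hcast, hcast]; exact congrArg _ hfix, ?_⟩
  rw [hcast, Ne, ofReal_inj]
  have : -b < -1 / b := by
    rw [neg_div, neg_lt_neg_iff, div_lt_iff₀ (by linarith)]; nlinarith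
  linarith [ha.trans hzIoo.1]
end
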